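/- arXiv:2111.08216 — 2 statements merged into one kernel-verified Lean document; each statement's English description precedes it below -/
import Mathlib

section
/- For all positive integers m, the sum over k from 1 to m of ψ₀(m+1−k)/k equals ψ₀(m+1)² − ψ₀(1)·ψ₀(m+1) + ψ₁(m+1) − ψ₁(1). -/
open Finset

/-- The digamma function ψ₀ = (log ∘ Γ)'. -/
noncomputable def digamma (x : ℝ) : ℝ := deriv (fun y : ℝ => Real.log (Real.Gamma y)) x

/-- The trigamma function ψ₁ = ψ₀'. -/
noncomputable def trigamma (x : ℝ) : ℝ := deriv digamma x

lemma analyticOnNhd_logGamma :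
    AnalyticOnNhd ℝ (fun y : ℝ => Real.log (Real.Gamma y)) (Set.Ioi 0) := by
  intro x hx
  have hx : (0:ℝ) < x := hx
  have hC : AnalyticAt ℂ (fun z : ℂ => Complex.log (Complex.Gamma z)) (x : ℂ) := by
    have hG : AnalyticAt ℂ Complex.Gamma (x : ℂ) := by
      rw [Complex.analyticAt_iff_eventually_differentiableAt]
      have hopen : IsOpen {z : ℂ | 0 < z.re} := isOpen_lt continuous_const Complex.continuous_re
      have hmem : (x : ℂ) ∈ {z : ℂ | 0 < z.re} := by simpa using hx
      filter_upwards [hopen.eventually_mem hmem] with z hz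
      refine Complex.differentiableAt_Gamma _ (fun m => ?_)
      intro h
      rw [h] at hz
      simp only [Set.mem_setOf_eq, Complex.neg_re, Complex.natCast_re] at hz
      have : (0:ℝ) ≤ m := m.cast_nonneg
      linarith
    refine hG.clog ?_
    rw [Complex.Gamma_ofReal]
    exact Complex.mem_slitPlane_iff.2 (Or.inl (by simpa using Real.Gamma_pos_of_pos hx))
  have hR : AnalyticAt ℝ
      (fun y : ℝ => (Complex.log (Complex.Gamma (y : ℂ))).re) x := by
    have h1 : AnalyticAt ℝ (fun z : ℂ => Complex.log (Complex.Gamma z)) (x : ℂ) :=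
      hC.restrictScalars
    have h2 : AnalyticAt ℝ (fun y : ℝ => (y : ℂ)) x := Complex.ofRealCLM.analyticAt x
    have h3 := h1.comp h2
    exact (Complex.reCLM.analyticAt _).comp h3
  refine hR.congr ?_
  filter_upwards [eventually_gt_nhds hx] with y hy
  have hΓ : (0:ℝ) < Real.Gamma y := Real.Gamma_pos_of_pos hy
  rw [Complex.Gamma_ofReal, ← Complex.ofReal_log hΓ.le, Complex.ofReal_re]

lemma differentiableAt_logGamma {x : ℝ} (hx : 0 < x) :
    DifferentiableAt ℝ (fun y : ℝ => Real.log (Real.Gamma y)) x :=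
  (analyticOnNhd_logGamma x hx).differentiableAt

lemma analyticOnNhd_digamma : AnalyticOnNhd ℝ digamma (Set.Ioi 0) :=
  analyticOnNhd_logGamma.deriv

lemma differentiableAt_digamma {x : ℝ} (hx : 0 < x) : DifferentiableAt ℝ digamma x :=
  (analyticOnNhd_digamma x hx).differentiableAt

lemma digamma_add_one {x : ℝ} (hx : 0 < x) : digamma (x + 1) = digamma x + x⁻¹ := by
  have h : deriv (fun y : ℝ => Real.log (Real.Gamma (y + 1))) x = digamma (x + 1) := by
    rw [digamma, ← deriv_comp_add_const]
  rw [← h]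
  have h2 : deriv (fun y : ℝ => Real.log (Real.Gamma y) + Real.log y) x
      = digamma x + x⁻¹ := by
    rw [deriv_fun_add (differentiableAt_logGamma hx) (Real.differentiableAt_log hx.ne'),
      Real.deriv_log, digamma]
  rw [← h2]
  apply Filter.EventuallyEq.deriv_eq
  filter_upwards [eventually_gt_nhds hx] with y hy
  rw [Real.Gamma_add_one hy.ne', Real.log_mul hy.ne' (Real.Gamma_pos_of_pos hy).ne', add_comm]

lemma trigamma_add_one {x : ℝ} (hx : 0 < x) : trigamma (x + 1) = trigamma x - (x ^ 2)⁻¹ := by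
  have h : deriv (fun y : ℝ => digamma (y + 1)) x = trigamma (x + 1) := by
    rw [trigamma, ← deriv_comp_add_const]
  rw [← h]
  have h2 : deriv (fun y : ℝ => digamma y + y⁻¹) x = trigamma x - (x ^ 2)⁻¹ := by
    rw [deriv_fun_add (differentiableAt_digamma hx) (differentiableAt_inv hx.ne'),
      deriv_inv, trigamma]
    ring
  rw [← h2]
  apply Filter.EventuallyEq.deriv_eq
  filter_upwards [eventually_gt_nhds hx] with y hy
  exact digamma_add_one hy

lemma digamma_nat (n : ℕ) :
    digamma ((n : ℝ) + 1) = digamma 1 + ∑ k ∈ Finset.Icc 1 n, ((k : ℝ))⁻¹ := by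
  induction n with
  | zero => simp
  | succ n ih =>
    have h : ((n:ℝ) + 1 + 1) = ((n:ℝ) + 1) + 1 := by ring
    rw [Nat.cast_succ, h, digamma_add_one (by positivity), ih,
      Finset.sum_Icc_succ_top (by omega)]
    push_cast
    ring

lemma trigamma_nat (n : ℕ) :
    trigamma ((n : ℝ) + 1) = trigamma 1 - ∑ k ∈ Finset.Icc 1 n, (((k : ℝ)) ^ 2)⁻¹ := by
  induction n with
  | zero => simp
  | succ n ih =>
    have h : ((n:ℝ) + 1 + 1) = ((n:ℝ) + 1) + 1 := by ring
    rw [Nat.cast_succ, h, trigamma_add_one (by positivity), ih,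
      Finset.sum_Icc_succ_top (by omega)]
    push_cast
    ring

noncomputable def H (n : ℕ) : ℝ := ∑ k ∈ Finset.Icc 1 n, ((k : ℝ))⁻¹

lemma key (m : ℕ) :
    ∑ k ∈ Finset.Icc 1 m, H (m - k) / k
      = H m ^ 2 - ∑ k ∈ Finset.Icc 1 m, (((k : ℝ)) ^ 2)⁻¹ := by
  induction m with
  | zero => simp [H]
  | succ m ih =>
    have hstep : ∑ k ∈ Finset.Icc 1 (m+1), H (m + 1 - k) / k
        = (∑ k ∈ Finset.Icc 1 m, H (m - k) / k)
          + ∑ k ∈ Finset.Icc 1 m, ((((m:ℝ) + 1 - k) * k))⁻¹ := by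
      rw [Finset.sum_Icc_succ_top (by omega)]
      have h0 : H (m + 1 - (m+1)) = 0 := by simp [H]
      rw [h0]
      simp only [zero_div, add_zero]
      rw [← Finset.sum_add_distrib]
      apply Finset.sum_congr rfl
      intro k hk
      simp only [Finset.mem_Icc] at hk
      have hk1 : (1:ℝ) ≤ k := by exact_mod_cast hk.1
      have hkm : (k:ℝ) ≤ m := by exact_mod_cast hk.2
      have h1 : m + 1 - k = (m - k) + 1 := by omega
      rw [h1, H, Finset.sum_Icc_succ_top (by omega), ← H]
      have h2 : ((m - k + 1 : ℕ) : ℝ) = (m:ℝ) + 1 - k := by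
        have : ((m - k : ℕ) : ℝ) = (m:ℝ) - k := by
          have := hk.2; push_cast [Nat.cast_sub this]; ring
        rw [Nat.cast_add, Nat.cast_one, this]; ring
      rw [h2]
      have hkpos : (0:ℝ) < k := by linarith
      have hmk : (0:ℝ) < (m:ℝ) + 1 - k := by linarith
      field_simp
    have hswap : ∑ k ∈ Finset.Icc 1 m, ((((m:ℝ) + 1 - k) * k))⁻¹
        = 2 * H m / (m + 1) := by
      have hsum : ∀ k ∈ Finset.Icc 1 m, ((((m:ℝ) + 1 - k) * k))⁻¹
          = ((m:ℝ)+1)⁻¹ * ((k:ℝ)⁻¹ + ((m:ℝ) + 1 - k)⁻¹) := by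
        intro k hk
        simp only [Finset.mem_Icc] at hk
        have hk1 : (1:ℝ) ≤ k := by exact_mod_cast hk.1
        have hkm : (k:ℝ) ≤ m := by exact_mod_cast hk.2
        have hkpos : (0:ℝ) < k := by linarith
        have hmk : (0:ℝ) < (m:ℝ) + 1 - k := by linarith
        field_simp
        ring
      rw [Finset.sum_congr rfl hsum, ← Finset.mul_sum, Finset.sum_add_distrib]
      have hrefl : ∑ k ∈ Finset.Icc 1 m, ((m:ℝ) + 1 - k)⁻¹ = H m := by
        rw [H]
        rw [show Finset.Icc 1 m = Finset.Icc 1 m from rfl]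
        apply Finset.sum_nbij' (fun k => m + 1 - k) (fun k => m + 1 - k)
        · intro a ha; simp only [Finset.mem_Icc] at *; omega
        · intro a ha; simp only [Finset.mem_Icc] at *; omega
        · intro a ha; simp only [Finset.mem_Icc] at ha; omega
        · intro a ha; simp only [Finset.mem_Icc] at ha; omega
        · intro a ha
          simp only [Finset.mem_Icc] at ha
          congr 1
          have : ((m + 1 - a : ℕ) : ℝ) = (m:ℝ) + 1 - a := by
            push_cast [Nat.cast_sub (by omega : a ≤ m + 1)]; ring
          rw [this]
      rw [hrefl, ← H]
      ring
    rw [hstep, hswap, ih]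
    have hH : H (m + 1) = H m + ((m:ℝ)+1)⁻¹ := by
      rw [H, Finset.sum_Icc_succ_top (by omega), ← H]; push_cast; ring
    rw [Finset.sum_Icc_succ_top (by omega : 1 ≤ m + 1), hH]
    have hm1 : ((m:ℝ)+1) ≠ 0 := by positivity
    push_cast
    field_simp
    ring

theorem sum_digamma_sub_div (m : ℕ) (hm : 0 < m) :
    ∑ k ∈ Finset.Icc 1 m, digamma ((m : ℝ) + 1 - k) / k =
      digamma ((m : ℝ) + 1) ^ 2 - digamma 1 * digamma ((m : ℝ) + 1)
        + trigamma ((m : ℝ) + 1) - trigamma 1 := by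
  have hL : ∑ k ∈ Finset.Icc 1 m, digamma ((m : ℝ) + 1 - k) / k
      = ∑ k ∈ Finset.Icc 1 m, (digamma 1 + H (m - k)) / k := by
    apply Finset.sum_congr rfl
    intro k hk
    simp only [Finset.mem_Icc] at hk
    have h1 : (m:ℝ) + 1 - k = ((m - k : ℕ) : ℝ) + 1 := by
      push_cast [Nat.cast_sub hk.2]; ring
    rw [h1, digamma_nat, ← H]
  rw [hL, digamma_nat m, trigamma_nat m]
  have hsplit : ∑ k ∈ Finset.Icc 1 m, (digamma 1 + H (m - k)) / k
      = digamma 1 * H m + ∑ k ∈ Finset.Icc 1 m, H (m - k) / k := by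
    rw [H, Finset.mul_sum, ← Finset.sum_add_distrib]
    apply Finset.sum_congr rfl
    intro k hk
    simp only [Finset.mem_Icc] at hk
    have : (k:ℝ) ≠ 0 := Nat.cast_ne_zero.mpr (by omega)
    field_simp
  rw [hsplit, key m, ← H]
  ring
end

section
/- For all positive integers m and real numbers a, b ≥ 0 with a ≠ b, the sum over k from 1 to m of ψ₀(k+b)/(k+a) plus the sum over k from 1 to m of ψ₀(k+a)/(k+b) equals ψ₀(m+a+1)·ψ₀(m+b+1) − ψ₀(a+1)·ψ₀(b+1) + (ψ₀(m+a+1) − ψ₀(m+b+1) − ψ₀(a+1) + ψ₀(b+1))/(a−b). -/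
open Finset

lemma digamma_rec (x : ℝ) (hx : 0 < x) : digamma (x + 1) = digamma x + 1 / x := by
  have hdiffΓ : DifferentiableAt ℝ Real.Gamma x := by
    apply Real.differentiableAt_Gamma
    intro n
    intro h
    have : (0:ℝ) < -(n:ℝ) := h ▸ hx
    have : (0:ℝ) ≤ (n:ℝ) := Nat.cast_nonneg n
    linarith
  have hΓpos : 0 < Real.Gamma x := Real.Gamma_pos_of_pos hx
  have hdiff : DifferentiableAt ℝ (fun y : ℝ => Real.log (Real.Gamma y)) x :=
    (Real.differentiableAt_log hΓpos.ne').comp x hdiffΓ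
  have hshift : deriv (fun y : ℝ => Real.log (Real.Gamma y)) (x + 1)
      = deriv (fun y : ℝ => Real.log (Real.Gamma (y + 1))) x := by
    rw [← deriv_comp_add_const (fun y : ℝ => Real.log (Real.Gamma y)) 1 x]
  have heq : (fun y : ℝ => Real.log (Real.Gamma (y + 1)))
      =ᶠ[nhds x] fun y : ℝ => Real.log y + Real.log (Real.Gamma y) := by
    filter_upwards [eventually_gt_nhds hx] with y hy
    rw [Real.Gamma_add_one hy.ne', Real.log_mul hy.ne' (Real.Gamma_pos_of_pos hy).ne']
  have : deriv (fun y : ℝ => Real.log (Real.Gamma (y + 1))) x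
      = deriv (fun y : ℝ => Real.log y + Real.log (Real.Gamma y)) x :=
    heq.deriv_eq
  rw [digamma, digamma, hshift, this,
    deriv_fun_add (Real.differentiableAt_log hx.ne') hdiff, Real.deriv_log, add_comm,
    one_div]

lemma key_step (n a b A B A0 B0 S1 S2 : ℝ) (hna : n+a+1 ≠ 0) (hnb : n+b+1 ≠ 0)
    (hab : a-b ≠ 0)
    (ih : S1 + S2 = A*B - A0*B0 + (A-B-A0+B0)/(a-b)) :
    S1 + B/(n+a+1) + (S2 + A/(n+b+1)) =
      (A+1/(n+a+1))*(B+1/(n+b+1)) - A0*B0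
        + ((A+1/(n+a+1)) - (B+1/(n+b+1)) - A0 + B0)/(a-b) := by
  have hu : (n+a+1) * (n+a+1)⁻¹ = 1 := mul_inv_cancel₀ hna
  have hv : (n+b+1) * (n+b+1)⁻¹ = 1 := mul_inv_cancel₀ hnb
  have hw : (a-b) * (a-b)⁻¹ = 1 := mul_inv_cancel₀ hab
  linear_combination ih + ((n+a+1)⁻¹*(n+b+1)⁻¹) * hw
    + ((n+a+1)⁻¹*(a-b)⁻¹) * hv - ((n+b+1)⁻¹*(a-b)⁻¹) * hu

theorem sum_digamma_cross (m : ℕ) (hm : 0 < m) (a b : ℝ) (ha : 0 ≤ a) (hb : 0 ≤ b)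
    (hab : a ≠ b) :
    (∑ k ∈ Finset.Icc 1 m, digamma ((k : ℝ) + b) / ((k : ℝ) + a))
      + ∑ k ∈ Finset.Icc 1 m, digamma ((k : ℝ) + a) / ((k : ℝ) + b) =
      digamma ((m : ℝ) + a + 1) * digamma ((m : ℝ) + b + 1)
        - digamma (a + 1) * digamma (b + 1)
        + (digamma ((m : ℝ) + a + 1) - digamma ((m : ℝ) + b + 1)
            - digamma (a + 1) + digamma (b + 1)) / (a - b) := by
  clear hm
  have hab' : a - b ≠ 0 := sub_ne_zero.mpr hab
  induction m with
  | zero =>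
    simp
  | succ n ih =>
    rw [Finset.sum_Icc_succ_top (Nat.le_add_left 1 n),
        Finset.sum_Icc_succ_top (Nat.le_add_left 1 n)]
    have hpa : (0:ℝ) < (n:ℝ) + a + 1 := by positivity
    have hpb : (0:ℝ) < (n:ℝ) + b + 1 := by positivity
    have ra : digamma ((↑(n+1):ℝ) + a + 1) = digamma ((n:ℝ) + a + 1) + 1 / ((n:ℝ) + a + 1) := by
      push_cast
      rw [show (n:ℝ) + 1 + a + 1 = ((n:ℝ) + a + 1) + 1 by ring, digamma_rec _ hpa]
    have rb : digamma ((↑(n+1):ℝ) + b + 1) = digamma ((n:ℝ) + b + 1) + 1 / ((n:ℝ) + b + 1) := by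
      push_cast
      rw [show (n:ℝ) + 1 + b + 1 = ((n:ℝ) + b + 1) + 1 by ring, digamma_rec _ hpb]
    rw [ra, rb]
    have hca : ((↑(n+1):ℝ) + a) = (n:ℝ) + a + 1 := by push_cast; ring
    have hcb : ((↑(n+1):ℝ) + b) = (n:ℝ) + b + 1 := by push_cast; ring
    rw [hca, hcb]
    exact key_step (n:ℝ) a b _ _ _ _ _ _ hpa.ne' hpb.ne' hab' ih
end
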